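/- Let K be a nonempty abstract simplicial complex, let n ≥ 0 be an integer, and let K_1, …, K_m be finitely many subcomplexes whose union is K. Suppose that for every k with 1 ≤ k ≤ m and all indices i_1 < i_2 < ⋯ < i_k, the intersection K_{i_1} ∩ ⋯ ∩ K_{i_k} is (n−k+1)-spherical when k ≤ n+1 and is empty when k ≥ n+2. Then K is n-spherical. -/

import Mathlib

open CategoryTheory

/-- Commutation rule for deleting two entries of a list. -/
theorem eraseIdx_eraseIdx_comm {α : Type*} :
    ∀ (l : List α) (i j : ℕ), i ≤ j →
      (l.eraseIdx i).eraseIdx j = (l.eraseIdx (j + 1)).eraseIdx i := by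
  intro l
  induction l with
  | nil => intro i j _; simp
  | cons a t ih =>
    intro i j hij
    match i, j with
    | 0, j => simp
    | i + 1, j + 1 =>
      simp only [List.eraseIdx_cons_succ]
      rw [ih i j (by omega)]

variable {α : Type} (P : List α → Prop) (hP : ∀ (l : List α) (j : ℕ), P l → P (l.eraseIdx j))

/-- Words (ordered tuples) of length `d` satisfying the admissibility predicate `P`:
the basis of the degree-`d` term of the augmented chain complex (a word of length `d`
is a `(d-1)`-simplex, the empty word generating the augmentation `ℤ` in degree `-1`). -/
def Word (d : ℕ) : Type := {l : List α // P l ∧ l.length = d}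

/-- Deletion of the `j`-th entry of a word. -/
def eraseWord {d : ℕ} (l : Word P (d + 1)) (j : Fin (d + 1)) : Word P d :=
  ⟨l.1.eraseIdx j, hP l.1 j l.2.1, by
    have h := l.2.2
    rw [List.length_eraseIdx_of_lt (by omega)]
    omega⟩

/-- The boundary map: the alternating sum of the entry deletions. -/
noncomputable def wordBoundary (d : ℕ) : (Word P (d + 1) →₀ ℤ) →ₗ[ℤ] (Word P d →₀ ℤ) :=
  Finsupp.lsum ℤ fun l =>
    ∑ j : Fin (d + 1), ((-1 : ℤ) ^ (j : ℕ)) • Finsupp.lsingle (eraseWord P hP l j)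

theorem wordBoundary_single {d : ℕ} (l : Word P (d + 1)) (b : ℤ) :
    wordBoundary P hP d (Finsupp.single l b)
      = ∑ j : Fin (d + 1), ((-1 : ℤ) ^ (j : ℕ)) • Finsupp.single (eraseWord P hP l j) b := by
  simp [wordBoundary, Finsupp.lsum_single, LinearMap.sum_apply, LinearMap.smul_apply,
    Finsupp.lsingle_apply]

/-- The sign-reversing involution on pairs of deletion indices, pairing
`(j, i)` (first delete entry `j`, then entry `i`) with the pair of indices deleting
the same two entries in the other order. -/
def deletionInvolution (d : ℕ) :
    Fin (d + 2) × Fin (d + 1) → Fin (d + 2) × Fin (d + 1) := fun p =>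
  if h : (p.2 : ℕ) < (p.1 : ℕ)
  then (⟨(p.2 : ℕ), by have := p.2.2; omega⟩, ⟨(p.1 : ℕ) - 1, by have := p.1.2; omega⟩)
  else (⟨(p.2 : ℕ) + 1, by have := p.2.2; omega⟩, ⟨(p.1 : ℕ), by have := p.2.2; omega⟩)

theorem deletionInvolution_of_lt {d : ℕ} {j : Fin (d + 2)} {i : Fin (d + 1)}
    (h : (i : ℕ) < (j : ℕ)) :
    deletionInvolution d (j, i)
      = (⟨(i : ℕ), by have := i.2; omega⟩, ⟨(j : ℕ) - 1, by have := j.2; omega⟩) := by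
  simp only [deletionInvolution]
  exact dif_pos h

theorem deletionInvolution_of_ge {d : ℕ} {j : Fin (d + 2)} {i : Fin (d + 1)}
    (h : ¬ (i : ℕ) < (j : ℕ)) :
    deletionInvolution d (j, i)
      = (⟨(i : ℕ) + 1, by have := i.2; omega⟩, ⟨(j : ℕ), by have := i.2; omega⟩) := by
  simp only [deletionInvolution]
  exact dif_neg h

theorem wordBoundary_comp_wordBoundary (d : ℕ) :
    (wordBoundary P hP d).comp (wordBoundary P hP (d + 1)) = 0 := by
  apply Finsupp.lhom_ext
  intro l b
  rw [LinearMap.comp_apply, wordBoundary_single, map_sum, LinearMap.zero_apply]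
  set f : Fin (d + 2) × Fin (d + 1) → (Word P d →₀ ℤ) := fun p =>
    (((-1 : ℤ) ^ (p.1 : ℕ)) * ((-1 : ℤ) ^ (p.2 : ℕ))) •
      Finsupp.single (eraseWord P hP (eraseWord P hP l p.1) p.2) b with hf
  have step : ∀ j : Fin (d + 2),
      wordBoundary P hP d (((-1 : ℤ) ^ (j : ℕ)) • Finsupp.single (eraseWord P hP l j) b)
        = ∑ i : Fin (d + 1), f (j, i) := by
    intro j
    simp only [hf]
    rw [map_smul, wordBoundary_single, Finset.smul_sum]
    exact Finset.sum_congr rfl fun i _ => smul_smul _ _ _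
  rw [Finset.sum_congr rfl (fun j _ => step j), ← Fintype.sum_prod_type]
  apply Finset.sum_ninvolution (deletionInvolution d)
  · -- the two terms of a matched pair cancel
    rintro ⟨j, i⟩
    by_cases h : (i : ℕ) < (j : ℕ)
    · rw [deletionInvolution_of_lt h]
      simp only [hf]
      have hword : eraseWord P hP (eraseWord P hP l ⟨(i : ℕ), by have := i.2; omega⟩)
            ⟨(j : ℕ) - 1, by have := j.2; omega⟩
          = eraseWord P hP (eraseWord P hP l j) i := by
        apply Subtype.ext
        show (l.1.eraseIdx (i : ℕ)).eraseIdx ((j : ℕ) - 1) = (l.1.eraseIdx (j : ℕ)).eraseIdx i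
        rw [eraseIdx_eraseIdx_comm l.1 (i : ℕ) ((j : ℕ) - 1) (by omega)]
        congr 2
        omega
      rw [hword, ← add_smul]
      have hcoef : ((-1 : ℤ) ^ (j : ℕ) * (-1 : ℤ) ^ (i : ℕ)
          + (-1 : ℤ) ^ (i : ℕ) * (-1 : ℤ) ^ ((j : ℕ) - 1)) = 0 := by
        obtain ⟨m, hm⟩ : ∃ m, (j : ℕ) = m + 1 := ⟨(j : ℕ) - 1, by omega⟩
        rw [hm]
        simp only [Nat.add_sub_cancel]
        rw [pow_succ]
        ring
      rw [hcoef, zero_smul]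
    · rw [deletionInvolution_of_ge h]
      simp only [hf]
      have hword : eraseWord P hP (eraseWord P hP l ⟨(i : ℕ) + 1, by have := i.2; omega⟩)
            ⟨(j : ℕ), by have := i.2; omega⟩
          = eraseWord P hP (eraseWord P hP l j) i := by
        apply Subtype.ext
        show (l.1.eraseIdx ((i : ℕ) + 1)).eraseIdx (j : ℕ) = (l.1.eraseIdx (j : ℕ)).eraseIdx i
        rw [← eraseIdx_eraseIdx_comm l.1 (j : ℕ) (i : ℕ) (by omega)]
      rw [hword, ← add_smul]
      have hcoef : ((-1 : ℤ) ^ (j : ℕ) * (-1 : ℤ) ^ (i : ℕ)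
          + (-1 : ℤ) ^ ((i : ℕ) + 1) * (-1 : ℤ) ^ (j : ℕ)) = 0 := by
        rw [pow_succ]
        ring
      rw [hcoef, zero_smul]
  · -- the involution has no fixed point with nonzero contribution
    rintro ⟨j, i⟩ _
    by_cases h : (i : ℕ) < (j : ℕ)
    · rw [deletionInvolution_of_lt h]
      intro hcon
      have h1 : (i : ℕ) = (j : ℕ) :=
        congrArg (fun q : Fin (d + 2) × Fin (d + 1) => (q.1 : ℕ)) hcon
      omega
    · rw [deletionInvolution_of_ge h]
      intro hcon
      have h1 : (i : ℕ) + 1 = (j : ℕ) :=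
        congrArg (fun q : Fin (d + 2) × Fin (d + 1) => (q.1 : ℕ)) hcon
      have h2 : (j : ℕ) = (i : ℕ) :=
        congrArg (fun q : Fin (d + 2) × Fin (d + 1) => (q.2 : ℕ)) hcon
      omega
  · intro a; exact Finset.mem_univ _
  · -- the pairing is an involution
    rintro ⟨j, i⟩
    by_cases h : (i : ℕ) < (j : ℕ)
    · rw [deletionInvolution_of_lt h, deletionInvolution_of_ge (by simp; omega)]
      apply Prod.ext
      · apply Fin.ext; simp; omega
      · apply Fin.ext; simp
    · rw [deletionInvolution_of_ge h, deletionInvolution_of_lt (by simp; omega)]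
      apply Prod.ext
      · apply Fin.ext; simp
      · apply Fin.ext; simp

/-- The augmented chain complex of admissible words: in degree `d` the free abelian group
on words of length `d` (so degree `0` is the augmentation copy of `ℤ`, spanned by the
empty word, and a word of length `d` is a simplex of dimension `d - 1`), with boundary
the alternating sum of entry deletions. -/
noncomputable def wordComplex : ChainComplex (ModuleCat ℤ) ℕ :=
  ChainComplex.of (fun d => ModuleCat.of ℤ (Word P d →₀ ℤ))
    (fun d => ModuleCat.ofHom (wordBoundary P hP d))
    (fun d => by
      have h := wordBoundary_comp_wordBoundary P hP d
      exact ModuleCat.hom_ext (LinearMap.ext fun x => DFunLike.congr_fun h x))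

/-- An abstract simplicial complex on a vertex type `V`: a collection of nonempty finite
sets of vertices (the simplices/faces) closed under passage to nonempty subsets. -/
structure AbstractSimplicialComplex' (V : Type) where
  faces : Set (Finset V)
  not_empty_mem : ∅ ∉ faces
  down_closed : ∀ s ∈ faces, ∀ t ⊆ s, t ≠ ∅ → t ∈ faces

/-- The admissibility predicate for the ordered simplicial chain complex of `K`:
a word is admissible if its entries are pairwise distinct and (if nonempty) span a
simplex of `K`. -/
def simplexWord {V : Type} [DecidableEq V] (K : AbstractSimplicialComplex' V)
    (l : List V) : Prop :=
  l.Nodup ∧ (l ≠ [] → l.toFinset ∈ K.faces)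

theorem simplexWord_eraseIdx {V : Type} [DecidableEq V] (K : AbstractSimplicialComplex' V) :
    ∀ (l : List V) (j : ℕ), simplexWord K l → simplexWord K (l.eraseIdx j) := by
  rintro l j ⟨hnd, hmem⟩
  refine ⟨(List.eraseIdx_sublist l j).nodup hnd, fun hne => ?_⟩
  have hl : l ≠ [] := by
    intro hnil
    rw [hnil] at hne
    simp at hne
  refine K.down_closed l.toFinset (hmem hl) (l.eraseIdx j).toFinset ?_ ?_
  · intro x hx
    rw [List.mem_toFinset] at hx ⊢
    exact (List.eraseIdx_sublist l j).subset hx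
  · intro hempty
    rw [List.toFinset_eq_empty_iff] at hempty
    exact hne hempty

/-- The augmented ordered simplicial chain complex of an abstract simplicial complex:
in (complex) degree `d`, the free abelian group on ordered `d`-tuples of pairwise
distinct vertices spanning a simplex of `K` (so degree `d` corresponds to simplices of
dimension `i = d - 1`, with the empty word spanning the augmentation `ℤ` in degree
`-1`), with boundary the alternating sum of entry deletions. -/
noncomputable def simplicialChainComplex {V : Type} [DecidableEq V]
    (K : AbstractSimplicialComplex' V) : ChainComplex (ModuleCat ℤ) ℕ :=
  wordComplex (simplexWord K) (simplexWord_eraseIdx K)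

/-- A nonempty abstract simplicial complex `K` is `n`-spherical if its reduced homology
`H̃_i` (with `ℤ` coefficients) vanishes for all `i ≠ n`; in terms of the augmented chain
complex, whose degree `d` corresponds to `i = d - 1`, the homology vanishes in every
degree `d ≠ n + 1`. -/
def IsSpherical {V : Type} [DecidableEq V] (K : AbstractSimplicialComplex' V)
    (n : ℕ) : Prop :=
  K.faces.Nonempty ∧ ∀ d : ℕ, d ≠ n + 1 →
    Limits.IsZero ((simplicialChainComplex K).homology d)

/-- The intersection of a nonempty family of simplicial complexes (as collections of
simplices). -/
def subcomplexInter {V : Type} {m : ℕ} (K : Fin m → AbstractSimplicialComplex' V)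
    (S : Finset (Fin m)) (hS : S.Nonempty) : AbstractSimplicialComplex' V where
  faces := ⋂ i ∈ S, (K i).faces
  not_empty_mem := by
    obtain ⟨i, hi⟩ := hS
    intro hmem
    exact (K i).not_empty_mem (Set.mem_iInter₂.mp hmem i hi)
  down_closed := by
    intro s hs t hts htne
    rw [Set.mem_iInter₂] at hs ⊢
    intro i hi
    exact (K i).down_closed s (hs i hi) t hts htne


/-!
Induction on the number of pieces. Write `K = K' ∪ Kₘ` with `K' = K₁ ∪ ⋯ ∪ Kₘ₋₁`. By induction
`K'` is `n`-spherical, `Kₘ` is `n`-spherical by hypothesis, and `K' ∩ Kₘ` is covered by the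
`Kᵢ ∩ Kₘ`, which satisfy the hypotheses for `n - 1`; so `K' ∩ Kₘ` is `(n - 1)`-spherical, or
empty when `n = 0`. The Mayer–Vietoris sequence
`H̃ᵢ(K') ⊕ H̃ᵢ(Kₘ) → H̃ᵢ(K) → H̃ᵢ₋₁(K' ∩ Kₘ)` then kills `H̃ᵢ(K)` for `i ≠ n`. Only this part of
the sequence is needed, and it comes from a diagram chase on ordered chains: a chain of `K` splits
into chains of `K'` and `Kₘ`, and a chain of `K'` that is also a chain of `Kₘ` is a chain of
`K' ∩ Kₘ`.
-/

section MayerVietorisChase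

open HomologicalComplex

variable {R : Type*} [Ring R] {ι : Type*} {c : ComplexShape ι}

theorem exactAt_iff_forall_exists_d_eq (K : HomologicalComplex (ModuleCat R) c) {i j k : ι}
    (hi : c.prev j = i) (hk : c.next j = k) :
    K.ExactAt j ↔ ∀ x : K.X j, K.d j k x = 0 → ∃ y : K.X i, K.d i j y = x := by
  rw [exactAt_iff' K i j k hi hk, ShortComplex.moduleCat_exact_iff]
  rfl

/-- `hsurj`, `hpullback` and `hinj` are the parts of the exactness of
`0 → I → A ⊕ B → U → 0` that the chase uses. -/
theorem exactAt_of_mayerVietoris {I A B U : HomologicalComplex (ModuleCat R) c}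
    (iA : I ⟶ A) (iB : I ⟶ B) (jA : A ⟶ U) (jB : B ⟶ U) (hcomm : iA ≫ jA = iB ≫ jB)
    {j k : ι} (hjk : c.Rel j k)
    (hsurj : ∀ z : U.X j, ∃ x y, jA.f j x + jB.f j y = z)
    (hpullback : ∀ x y, jA.f k x = jB.f k y → ∃ w, iA.f k w = x ∧ iB.f k w = y)
    (hinj : Function.Injective (iA.f (c.next k)))
    (hA : A.ExactAt j) (hB : B.ExactAt j) (hI : I.ExactAt k) : U.ExactAt j := by
  have comm {X Y : HomologicalComplex (ModuleCat R) c} (f : X ⟶ Y) (i i' : ι) (x : X.X i) :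
      f.f i' (X.d i i' x) = Y.d i i' (f.f i x) := by
    rw [← ConcreteCategory.comp_apply, ← f.comm, ConcreteCategory.comp_apply]
  have dd {X : HomologicalComplex (ModuleCat R) c} (i i' i'' : ι) (x : X.X i) :
      X.d i' i'' (X.d i i' x) = 0 := by
    rw [← ConcreteCategory.comp_apply, X.d_comp_d]
    rfl
  rw [exactAt_iff_forall_exists_d_eq _ rfl (c.next_eq' hjk)] at hA hB ⊢
  rw [exactAt_iff_forall_exists_d_eq _ (c.prev_eq' hjk) rfl] at hI
  intro z hz
  obtain ⟨x, y, rfl⟩ := hsurj z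
  obtain ⟨w, hwx, hwy⟩ : ∃ w, iA.f k w = A.d j k x ∧ iB.f k w = -B.d j k y := by
    apply hpullback
    rw [map_add] at hz
    rw [map_neg, comm, comm, eq_neg_iff_add_eq_zero, hz]
  obtain ⟨v, rfl⟩ := hI w (hinj (by rw [comm, hwx, dd, map_zero]))
  obtain ⟨a, ha⟩ := hA (x - iA.f j v) (by rw [map_sub, ← comm, hwx, sub_self])
  obtain ⟨b, hb⟩ := hB (y + iB.f j v) (by rw [map_add, ← comm, hwy, add_neg_cancel])
  have hv : jA.f j (iA.f j v) = jB.f j (iB.f j v) := by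
    rw [← ConcreteCategory.comp_apply, ← comp_f, hcomm, comp_f, ConcreteCategory.comp_apply]
  refine ⟨jA.f _ a + jB.f _ b, ?_⟩
  rw [map_add, ← comm, ← comm, ha, hb, map_sub, map_add, hv]
  abel

end MayerVietorisChase

section WordInclusion

variable {α : Type} {P Q R : List α → Prop}
  (hP : ∀ (l : List α) (j : ℕ), P l → P (l.eraseIdx j))
  (hQ : ∀ (l : List α) (j : ℕ), Q l → Q (l.eraseIdx j))
  (hR : ∀ (l : List α) (j : ℕ), R l → R (l.eraseIdx j))

theorem wordComplex_d (d : ℕ) :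
    (wordComplex P hP).d (d + 1) d = ModuleCat.ofHom (wordBoundary P hP d) := by
  simp [wordComplex]

def wordIncl (h : ∀ l, P l → Q l) {d : ℕ} (w : Word P d) : Word Q d :=
  ⟨w.1, h _ w.2.1, w.2.2⟩

theorem wordIncl_injective (h : ∀ l, P l → Q l) {d : ℕ} :
    Function.Injective (wordIncl h (d := d)) :=
  fun _ _ hw => Subtype.ext (congrArg (fun w : Word Q d => w.1) hw)

theorem wordBoundary_mapDomain_wordIncl (h : ∀ l, P l → Q l) (d : ℕ) (x : Word P (d + 1) →₀ ℤ) :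
    wordBoundary Q hQ d (x.mapDomain (wordIncl h))
      = (wordBoundary P hP d x).mapDomain (wordIncl h) := by
  induction x using Finsupp.induction_linear with
  | zero => simp
  | add x y hx hy => rw [Finsupp.mapDomain_add, map_add, hx, hy, map_add, Finsupp.mapDomain_add]
  | single w b =>
    rw [Finsupp.mapDomain_single, wordBoundary_single, wordBoundary_single,
      Finsupp.mapDomain_finsetSum]
    simp only [Finsupp.mapDomain_smul, Finsupp.mapDomain_single]
    rfl

noncomputable def wordComplexMap (h : ∀ l, P l → Q l) : wordComplex P hP ⟶ wordComplex Q hQ :=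
  ChainComplex.ofHom (fun d => ModuleCat.ofHom (Finsupp.lmapDomain ℤ ℤ (wordIncl h)))
    (fun d => by
      rw [wordComplex_d, wordComplex_d]
      ext x : 2
      exact wordBoundary_mapDomain_wordIncl hP hQ h d x)

theorem wordComplexMap_comp (hPQ : ∀ l, P l → Q l) (hQR : ∀ l, Q l → R l) :
    wordComplexMap hP hQ hPQ ≫ wordComplexMap hQ hR hQR
      = wordComplexMap hP hR (fun l h => hQR l (hPQ l h)) := by
  ext d x : 3
  exact Finsupp.mapDomain_comp.symm

theorem exists_mapDomain_wordIncl_add_eq (hPR : ∀ l, P l → R l) (hQR : ∀ l, Q l → R l)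
    (hcover : ∀ l, R l → P l ∨ Q l) {d : ℕ} (z : Word R d →₀ ℤ) :
    ∃ (x : Word P d →₀ ℤ) (y : Word Q d →₀ ℤ),
      x.mapDomain (wordIncl hPR) + y.mapDomain (wordIncl hQR) = z := by
  induction z using Finsupp.induction_linear with
  | zero => exact ⟨0, 0, by simp⟩
  | add z z' hz hz' =>
    obtain ⟨x, y, rfl⟩ := hz
    obtain ⟨x', y', rfl⟩ := hz'
    exact ⟨x + x', y + y', by rw [Finsupp.mapDomain_add, Finsupp.mapDomain_add]; abel⟩
  | single w b =>
    rcases hcover w.1 w.2.1 with hw | hw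
    · exact ⟨Finsupp.single (⟨w.1, hw, w.2.2⟩ : Word P d) b, 0, by
        rw [Finsupp.mapDomain_zero, add_zero]; exact Finsupp.mapDomain_single⟩
    · exact ⟨0, Finsupp.single (⟨w.1, hw, w.2.2⟩ : Word Q d) b, by
        rw [Finsupp.mapDomain_zero, zero_add]; exact Finsupp.mapDomain_single⟩

theorem exists_mapDomain_wordIncl_eq_of_eq {I : List α → Prop} (hIP : ∀ l, I l → P l)
    (hIQ : ∀ l, I l → Q l) (hPR : ∀ l, P l → R l) (hQR : ∀ l, Q l → R l)
    (hPQ : ∀ l, P l → Q l → I l) {d : ℕ} {x : Word P d →₀ ℤ} {y : Word Q d →₀ ℤ}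
    (hxy : x.mapDomain (wordIncl hPR) = y.mapDomain (wordIncl hQR)) :
    ∃ w : Word I d →₀ ℤ, w.mapDomain (wordIncl hIP) = x ∧ w.mapDomain (wordIncl hIQ) = y := by
  classical
  have hx : ↑x.support ⊆ Set.range (wordIncl hIP (d := d)) := by
    intro a ha
    have hmem : wordIncl hPR a ∈ (y.mapDomain (wordIncl hQR)).support := by
      rw [← hxy, Finsupp.mapDomain_support_of_injective (wordIncl_injective hPR)]
      exact Finset.mem_image_of_mem _ ha
    obtain ⟨b, -, hb⟩ := Finset.mem_image.1 (Finsupp.mapDomain_support hmem)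
    have hab : b.1 = a.1 := congrArg (fun w : Word R d => w.1) hb
    exact ⟨⟨a.1, hPQ _ a.2.1 (hab ▸ b.2.1), a.2.2⟩, rfl⟩
  obtain ⟨w, hw⟩ : ∃ w : Word I d →₀ ℤ, w.mapDomain (wordIncl hIP) = x :=
    ⟨_, Finsupp.mapDomain_comapDomain _ (wordIncl_injective hIP) x hx⟩
  refine ⟨w, hw, Finsupp.mapDomain_injective (wordIncl_injective hQR) ?_⟩
  rw [← hxy, ← hw, ← Finsupp.mapDomain_comp, ← Finsupp.mapDomain_comp]
  rfl

theorem wordComplex_exactAt_zero {a : α} (ha : P [a]) : (wordComplex P hP).ExactAt 0 := by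
  rw [exactAt_iff_forall_exists_d_eq _ (ChainComplex.prev ℕ 0) ChainComplex.next_nat_zero,
    wordComplex_d]
  rintro x -
  induction x using Finsupp.induction_linear with
  | zero => exact ⟨0, map_zero _⟩
  | add x y hx hy =>
    obtain ⟨x', rfl⟩ := hx
    obtain ⟨y', rfl⟩ := hy
    exact ⟨x' + y', map_add _ _ _⟩
  | single w b =>
    let u : Word P (0 + 1) := ⟨[a], ha, rfl⟩
    have hu : eraseWord P hP u 0 = w := Subtype.ext (List.length_eq_zero_iff.mp w.2.2).symm
    refine ⟨Finsupp.single u b, ?_⟩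
    change wordBoundary P hP 0 _ = _
    rw [wordBoundary_single, Fin.sum_univ_one, hu, Fin.val_zero, pow_zero, one_smul]

theorem wordComplex_exactAt_of_isEmpty {d : ℕ} [IsEmpty (Word P d)] :
    (wordComplex P hP).ExactAt d :=
  .of_isZero (ModuleCat.isZero_of_subsingleton (ModuleCat.of ℤ (Word P d →₀ ℤ)))

end WordInclusion

namespace AbstractSimplicialComplex'

variable {V : Type}

theorem ext {K L : AbstractSimplicialComplex' V} (h : K.faces = L.faces) : K = L := by
  cases K; cases L; cases h; rfl

def iUnion {ι : Type*} (K : ι → AbstractSimplicialComplex' V) : AbstractSimplicialComplex' V where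
  faces := ⋃ i, (K i).faces
  not_empty_mem h := by
    obtain ⟨i, hi⟩ := Set.mem_iUnion.mp h
    exact (K i).not_empty_mem hi
  down_closed s hs t hts htne := by
    obtain ⟨i, hi⟩ := Set.mem_iUnion.mp hs
    exact Set.mem_iUnion.mpr ⟨i, (K i).down_closed s hi t hts htne⟩

def inter (K L : AbstractSimplicialComplex' V) : AbstractSimplicialComplex' V where
  faces := K.faces ∩ L.faces
  not_empty_mem h := K.not_empty_mem h.1
  down_closed s hs t hts htne :=
    ⟨K.down_closed s hs.1 t hts htne, L.down_closed s hs.2 t hts htne⟩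

end AbstractSimplicialComplex'

section SimplicialChains

open AbstractSimplicialComplex'

variable {V : Type} [DecidableEq V] {K L : AbstractSimplicialComplex' V}

theorem simplexWord_mono (h : K.faces ⊆ L.faces) {l : List V} (hl : simplexWord K l) :
    simplexWord L l :=
  ⟨hl.1, fun hne => h (hl.2 hne)⟩

noncomputable def simplicialChainMap (h : K.faces ⊆ L.faces) :
    simplicialChainComplex K ⟶ simplicialChainComplex L :=
  wordComplexMap _ _ fun _ => simplexWord_mono h

theorem simplicialChainMap_comp {M : AbstractSimplicialComplex' V} (hKL : K.faces ⊆ L.faces)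
    (hLM : L.faces ⊆ M.faces) :
    simplicialChainMap hKL ≫ simplicialChainMap hLM = simplicialChainMap (hKL.trans hLM) :=
  wordComplexMap_comp _ _ _ _ _

theorem simplicialChainComplex_exactAt_zero (hK : K.faces.Nonempty) :
    (simplicialChainComplex K).ExactAt 0 := by
  obtain ⟨s, hs⟩ := hK
  obtain ⟨v, hv⟩ := Finset.nonempty_iff_ne_empty.mpr fun h => K.not_empty_mem (h ▸ hs)
  have hvK : ({v} : Finset V) ∈ K.faces :=
    K.down_closed s hs {v} (Finset.singleton_subset_iff.mpr hv) (Finset.singleton_ne_empty v)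
  exact wordComplex_exactAt_zero _ (a := v) ⟨List.nodup_singleton v, fun _ => by simpa using hvK⟩

theorem simplicialChainComplex_exactAt_succ_of_faces_eq_empty (hK : K.faces = ∅) (e : ℕ) :
    (simplicialChainComplex K).ExactAt (e + 1) :=
  have : IsEmpty (Word (simplexWord K) (e + 1)) := ⟨fun w => by
    have hne : w.1 ≠ [] := List.ne_nil_of_length_pos (by rw [w.2.2]; omega)
    simpa [hK] using w.2.1.2 hne⟩
  wordComplex_exactAt_of_isEmpty _

theorem simplicialChainComplex_exactAt_succ_of_union {A B U : AbstractSimplicialComplex' V}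
    (hU : U.faces = A.faces ∪ B.faces) {e : ℕ}
    (hA : (simplicialChainComplex A).ExactAt (e + 1))
    (hB : (simplicialChainComplex B).ExactAt (e + 1))
    (hAB : (simplicialChainComplex (A.inter B)).ExactAt e) :
    (simplicialChainComplex U).ExactAt (e + 1) := by
  have hAU : A.faces ⊆ U.faces := hU ▸ Set.subset_union_left
  have hBU : B.faces ⊆ U.faces := hU ▸ Set.subset_union_right
  have hIA : (A.inter B).faces ⊆ A.faces := Set.inter_subset_left
  have hIB : (A.inter B).faces ⊆ B.faces := Set.inter_subset_right
  have hcover (l : List V) (hl : simplexWord U l) : simplexWord A l ∨ simplexWord B l := by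
    by_cases hnil : l = []
    · exact .inl ⟨hl.1, fun h => absurd hnil h⟩
    · rcases hU ▸ hl.2 hnil with h | h
      exacts [.inl ⟨hl.1, fun _ => h⟩, .inr ⟨hl.1, fun _ => h⟩]
  have hinter (l : List V) (hlA : simplexWord A l) (hlB : simplexWord B l) :
      simplexWord (A.inter B) l :=
    ⟨hlA.1, fun hne => ⟨hlA.2 hne, hlB.2 hne⟩⟩
  refine exactAt_of_mayerVietoris (simplicialChainMap hIA) (simplicialChainMap hIB)
    (simplicialChainMap hAU) (simplicialChainMap hBU)
    (by rw [simplicialChainMap_comp, simplicialChainMap_comp]) (by simp)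
    (fun z => exists_mapDomain_wordIncl_add_eq _ _ hcover z)
    (fun x y hxy => exists_mapDomain_wordIncl_eq_of_eq _ _ _ _ hinter hxy)
    (Finsupp.mapDomain_injective (wordIncl_injective _)) hA hB hAB

end SimplicialChains

section Intersections

open AbstractSimplicialComplex'

variable {V : Type}

theorem subcomplexInter_singleton {m : ℕ} (K : Fin m → AbstractSimplicialComplex' V) (i : Fin m) :
    subcomplexInter K {i} (Finset.singleton_nonempty i) = K i :=
  ext (Finset.set_biInter_singleton _ _)

theorem subcomplexInter_castSucc {m : ℕ} (K : Fin (m + 1) → AbstractSimplicialComplex' V)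
    (S : Finset (Fin m)) (hS : S.Nonempty) :
    subcomplexInter (fun i => K i.castSucc) S hS
      = subcomplexInter K (S.map Fin.castSuccEmb) hS.map := by
  apply ext
  simp only [subcomplexInter, Finset.map_eq_image, Finset.set_biInter_finset_image]
  rfl

theorem subcomplexInter_inter_last {m : ℕ} (K : Fin (m + 1) → AbstractSimplicialComplex' V)
    (S : Finset (Fin m)) (hS : S.Nonempty) :
    subcomplexInter (fun i => (K i.castSucc).inter (K (Fin.last m))) S hS
      = subcomplexInter K (insert (Fin.last m) (S.map Fin.castSuccEmb))
          (Finset.insert_nonempty _ _) := by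
  apply ext
  simp only [subcomplexInter, inter, Finset.set_biInter_insert, Finset.map_eq_image,
    Finset.set_biInter_finset_image]
  rw [Set.inter_comm]
  exact Set.biInter_inter (s := (S : Set (Fin m))) (Finset.coe_nonempty.mpr hS) _ _

theorem card_insert_last_map_castSucc {m : ℕ} (S : Finset (Fin m)) :
    (insert (Fin.last m) (S.map Fin.castSuccEmb)).card = S.card + 1 := by
  rw [Finset.card_insert_of_notMem (by simp [Fin.castSucc_ne_last]), Finset.card_map]

end Intersections

section Spherical

open AbstractSimplicialComplex'

variable {V : Type} [DecidableEq V]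

theorem IsSpherical.exactAt {K : AbstractSimplicialComplex' V} {n d : ℕ} (hK : IsSpherical K n)
    (hd : d ≠ n + 1) : (simplicialChainComplex K).ExactAt d :=
  (HomologicalComplex.exactAt_iff_isZero_homology _ _).mpr (hK.2 d hd)

theorem isSpherical_of_union {A B U : AbstractSimplicialComplex' V} {n : ℕ}
    (hU : U.faces = A.faces ∪ B.faces) (hA : IsSpherical A n) (hB : IsSpherical B n)
    (hAB : ∀ e ≠ n, (simplicialChainComplex (A.inter B)).ExactAt e) : IsSpherical U n := by
  have hne : U.faces.Nonempty := hU ▸ hA.1.mono Set.subset_union_left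
  refine ⟨hne, fun d hd => ?_⟩
  rw [← HomologicalComplex.exactAt_iff_isZero_homology]
  cases d with
  | zero => exact simplicialChainComplex_exactAt_zero hne
  | succ e =>
    exact simplicialChainComplex_exactAt_succ_of_union hU (hA.exactAt hd) (hB.exactAt hd)
      (hAB e (by omega))

def IsSphericalCover {m : ℕ} (K : Fin m → AbstractSimplicialComplex' V) (n : ℕ) : Prop :=
  (∀ (S : Finset (Fin m)) (hS : S.Nonempty), S.card ≤ n + 1 →
    IsSpherical (subcomplexInter K S hS) (n + 1 - S.card)) ∧
  ∀ (S : Finset (Fin m)) (hS : S.Nonempty), n + 2 ≤ S.card → (subcomplexInter K S hS).faces = ∅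

namespace IsSphericalCover

variable {m n : ℕ}

theorem isSpherical {K : Fin m → AbstractSimplicialComplex' V} (h : IsSphericalCover K n)
    (i : Fin m) : IsSpherical (K i) n := by
  simpa [subcomplexInter_singleton] using h.1 {i} (Finset.singleton_nonempty i) (by simp)

theorem castSucc {K : Fin (m + 1) → AbstractSimplicialComplex' V} (h : IsSphericalCover K n) :
    IsSphericalCover (fun i => K i.castSucc) n := by
  refine ⟨fun S hS hc => ?_, fun S hS hc => ?_⟩
  · simpa [subcomplexInter_castSucc] using h.1 _ hS.map (by simpa using hc)
  · simpa [subcomplexInter_castSucc] using h.2 _ hS.map (by simpa using hc)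

theorem inter_last {K : Fin (m + 1) → AbstractSimplicialComplex' V}
    (h : IsSphericalCover K (n + 1)) :
    IsSphericalCover (fun i => (K i.castSucc).inter (K (Fin.last m))) n := by
  refine ⟨fun S hS hc => ?_, fun S hS hc => ?_⟩
  · simpa [subcomplexInter_inter_last, card_insert_last_map_castSucc] using
      h.1 (insert (Fin.last m) (S.map Fin.castSuccEmb)) (Finset.insert_nonempty _ _)
        (by rw [card_insert_last_map_castSucc]; omega)
  · simpa [subcomplexInter_inter_last] using
      h.2 (insert (Fin.last m) (S.map Fin.castSuccEmb)) (Finset.insert_nonempty _ _)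
        (by rw [card_insert_last_map_castSucc]; omega)

theorem faces_inter_last_eq_empty {K : Fin (m + 1) → AbstractSimplicialComplex' V}
    (h : IsSphericalCover K 0) (i : Fin m) :
    ((K i.castSucc).inter (K (Fin.last m))).faces = ∅ := by
  have := h.2 _ (Finset.insert_nonempty (Fin.last m) (({i} : Finset (Fin m)).map Fin.castSuccEmb))
    (by rw [card_insert_last_map_castSucc, Finset.card_singleton])
  rwa [← subcomplexInter_inter_last K {i} (Finset.singleton_nonempty i),
    subcomplexInter_singleton] at this

end IsSphericalCover

theorem isSpherical_iUnion {m n : ℕ} {K : Fin (m + 1) → AbstractSimplicialComplex' V}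
    (h : IsSphericalCover K n) : IsSpherical (iUnion K) n := by
  induction m generalizing n with
  | zero =>
    have hK : iUnion K = K 0 := ext (Set.ext fun s => by simp [iUnion, Fin.exists_fin_one])
    exact hK ▸ h.isSpherical 0
  | succ m ih =>
    have hI : (iUnion fun i : Fin (m + 1) => K i.castSucc).inter (K (Fin.last (m + 1)))
        = iUnion fun i : Fin (m + 1) => (K i.castSucc).inter (K (Fin.last (m + 1))) :=
      ext (Set.iUnion_inter _ _)
    refine isSpherical_of_union (A := iUnion fun i : Fin (m + 1) => K i.castSucc)
      (B := K (Fin.last (m + 1))) (Set.iUnion_fin_add_one_eq_iUnion_castSucc fun i => (K i).faces)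
      (ih h.castSucc) (h.isSpherical _) fun e he => ?_
    cases n with
    | zero =>
      obtain ⟨e, rfl⟩ := Nat.exists_eq_succ_of_ne_zero he
      refine simplicialChainComplex_exactAt_succ_of_faces_eq_empty ?_ e
      rw [hI]
      exact Set.iUnion_eq_empty.mpr h.faces_inter_last_eq_empty
    | succ n =>
      rw [hI]
      exact (ih h.inter_last).exactAt he

end Spherical

theorem isSpherical_of_cover_general {V : Type} [DecidableEq V]
    (L : AbstractSimplicialComplex' V) (hne : L.faces.Nonempty) (n : ℕ) (m : ℕ)
    (K : Fin m → AbstractSimplicialComplex' V)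
    (hcover : (⋃ i, (K i).faces) = L.faces)
    (hint : ∀ (S : Finset (Fin m)) (hS : S.Nonempty), S.card ≤ n + 1 →
      IsSpherical (subcomplexInter K S hS) (n + 1 - S.card))
    (hempty : ∀ (S : Finset (Fin m)) (hS : S.Nonempty), n + 2 ≤ S.card →
      (subcomplexInter K S hS).faces = ∅) :
    IsSpherical L n := by
  cases m with
  | zero =>
    obtain ⟨s, hs⟩ := hne
    obtain ⟨i, -⟩ := Set.mem_iUnion.mp (hcover ▸ hs)
    exact i.elim0
  | succ m =>
    rw [← AbstractSimplicialComplex'.ext (K := .iUnion K) hcover]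
    exact isSpherical_iUnion ⟨hint, hempty⟩

/-- Quillen's lemma on spherical covers: if a nonempty simplicial complex `L` is covered
by subcomplexes `K_1, …, K_m` such that every `k`-fold intersection
`K_{i_1} ∩ ⋯ ∩ K_{i_k}` (for `i_1 < ⋯ < i_k`) is `(n - k + 1)`-spherical for
`k ≤ n + 1` and empty for `k ≥ n + 2`, then `L` is `n`-spherical. -/
theorem isSpherical_of_cover {V : Type} [DecidableEq V]
    (L : AbstractSimplicialComplex' V) (hne : L.faces.Nonempty) (n : ℕ) (m : ℕ)
    (K : Fin m → AbstractSimplicialComplex' V)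
    (hsub : ∀ i, (K i).faces ⊆ L.faces)
    (hcover : (⋃ i, (K i).faces) = L.faces)
    (hint : ∀ (S : Finset (Fin m)) (hS : S.Nonempty), S.card ≤ n + 1 →
      IsSpherical (subcomplexInter K S hS) (n + 1 - S.card))
    (hempty : ∀ (S : Finset (Fin m)) (hS : S.Nonempty), n + 2 ≤ S.card →
      (subcomplexInter K S hS).faces = ∅) :
    IsSpherical L n :=
  isSpherical_of_cover_general L hne n m K hcover hint hempty
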